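/- arXiv:1003.0242 — 3 statements merged into one kernel-verified Lean document; each statement's English description precedes it below -/
import Mathlib

section
/- Define g(c) = 2/c − 1/(1 − exp(−c/2)) + 1 for c > 0. Then g is strictly monotone (decreasing) on (0,∞), g(c) → 1/2 as c → 0+, and g(c) → 0 as c → ∞; hence for every ρ > 2 there is a unique c > 0 with g(c) = 1/ρ. -/
/-!
Substituting u = c/2 turns g into φ(u) = 1/u − 1/(eᵘ − 1). Its derivative
eᵘ/(eᵘ − 1)² − 1/u² is negative because u < 2 sinh(u/2), and writing
φ(u) = (eᵘ − 1 − u) / (u(eᵘ − 1)) two applications of l'Hôpital's rule give φ(0⁺) = 1/2,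
while φ(∞) = 0 is immediate. Uniqueness of the solution of g(c) = 1/ρ follows from strict
monotonicity, existence from the intermediate value theorem between the two limits.
-/

open Real Filter Set Topology

theorem StrictAntiOn.existsUnique_eq_of_tendsto {α β : Type*} [ConditionallyCompleteLinearOrder α]
    [TopologicalSpace α] [OrderTopology α] [DenselyOrdered α] [NoMaxOrder α]
    [LinearOrder β] [TopologicalSpace β] [OrderClosedTopology β]
    {f : α → β} {x₀ : α} {a b y : β} (hf : StrictAntiOn f (Ioi x₀))
    (hcont : ContinuousOn f (Ioi x₀)) (hleft : Tendsto f (𝓝[>] x₀) (𝓝 a))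
    (hright : Tendsto f atTop (𝓝 b)) (hby : b < y) (hya : y < a) :
    ∃! x, x₀ < x ∧ f x = y := by
  obtain ⟨p, hpy, hp⟩ :=
    ((hleft.eventually (eventually_gt_nhds hya)).and self_mem_nhdsWithin).exists
  obtain ⟨q, hqy, hpq⟩ :=
    ((hright.eventually (eventually_lt_nhds hby)).and (eventually_gt_atTop p)).exists
  obtain ⟨x, hx, hfx⟩ :=
    intermediate_value_Icc' hpq.le (hcont.mono fun z hz => lt_of_lt_of_le hp hz.1) ⟨hqy.le, hpy.le⟩
  have hx₀ : x₀ < x := lt_of_lt_of_le hp hx.1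
  exact ⟨x, ⟨hx₀, hfx⟩, fun z hz => hf.injOn hz.1 hx₀ (hz.2.trans hfx.symm)⟩

lemma mul_exp_half_lt_exp_sub_one {u : ℝ} (hu : 0 < u) : u * exp (u / 2) < exp u - 1 := by
  have h := Real.self_lt_sinh_iff.mpr (half_pos hu)
  rw [sinh_eq] at h
  have hprod : exp (u / 2) * exp (-(u / 2)) = 1 := by rw [← exp_add]; simp
  have hsq : exp (u / 2) * exp (u / 2) = exp u := by rw [← exp_add]; ring_nf
  nlinarith [exp_pos (u / 2)]

lemma sq_mul_exp_lt_exp_sub_one_sq {u : ℝ} (hu : 0 < u) : u ^ 2 * exp u < (exp u - 1) ^ 2 := by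
  have h := mul_exp_half_lt_exp_sub_one hu
  have hsq : exp (u / 2) ^ 2 = exp u := by rw [← exp_nat_mul]; ring_nf
  calc u ^ 2 * exp u = (u * exp (u / 2)) ^ 2 := by rw [mul_pow, hsq]
    _ < (exp u - 1) ^ 2 := pow_lt_pow_left₀ h (by positivity) two_ne_zero

lemma hasDerivAt_inv_sub_inv_exp_sub_one {u : ℝ} (hu : u ≠ 0) :
    HasDerivAt (fun u => u⁻¹ - (exp u - 1)⁻¹) (exp u / (exp u - 1) ^ 2 - (u ^ 2)⁻¹) u := by
  have hexp : exp u - 1 ≠ 0 := sub_ne_zero.mpr fun h => hu (exp_eq_one_iff u |>.mp h)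
  exact ((hasDerivAt_inv hu).sub (((hasDerivAt_exp u).sub_const 1).inv hexp)).congr_deriv (by ring)

lemma continuousOn_inv_sub_inv_exp_sub_one :
    ContinuousOn (fun u : ℝ => u⁻¹ - (exp u - 1)⁻¹) (Ioi 0) := fun _u hu =>
  (hasDerivAt_inv_sub_inv_exp_sub_one (ne_of_gt hu)).continuousAt.continuousWithinAt

lemma strictAntiOn_inv_sub_inv_exp_sub_one :
    StrictAntiOn (fun u : ℝ => u⁻¹ - (exp u - 1)⁻¹) (Ioi 0) := by
  refine strictAntiOn_of_hasDerivWithinAt_neg (f' := fun u => exp u / (exp u - 1) ^ 2 - (u ^ 2)⁻¹)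
    (convex_Ioi 0) continuousOn_inv_sub_inv_exp_sub_one ?_ ?_ <;>
    rw [interior_Ioi] <;> intro u (hu : 0 < u)
  · exact (hasDerivAt_inv_sub_inv_exp_sub_one hu.ne').hasDerivWithinAt
  · have h1 : 0 < exp u - 1 := sub_pos.mpr (one_lt_exp_iff.mpr hu)
    rw [sub_neg, div_lt_iff₀ (by positivity), inv_mul_eq_div, lt_div_iff₀ (by positivity)]
    linarith [sq_mul_exp_lt_exp_sub_one_sq hu]

lemma tendsto_inv_sub_inv_exp_sub_one_atTop :
    Tendsto (fun u : ℝ => u⁻¹ - (exp u - 1)⁻¹) atTop (𝓝 0) := by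
  simpa [sub_eq_add_neg] using tendsto_inv_atTop_zero.sub
    (tendsto_inv_atTop_zero.comp (tendsto_atTop_add_const_right _ (-1) tendsto_exp_atTop))

lemma tendsto_nhdsGT_zero_of_continuous {f : ℝ → ℝ} (hf : Continuous f) (h0 : f 0 = 0) :
    Tendsto f (𝓝[>] 0) (𝓝 0) :=
  (hf.tendsto' 0 0 h0).mono_left nhdsWithin_le_nhds

lemma tendsto_exp_sub_one_div_exp_sub_one_add_mul_exp :
    Tendsto (fun u : ℝ => (exp u - 1) / (exp u - 1 + u * exp u)) (𝓝[>] 0) (𝓝 (1 / 2)) := by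
  refine HasDerivAt.lhopital_zero_nhdsGT (f' := exp) (g' := fun u => (2 + u) * exp u)
    (Eventually.of_forall fun u => (hasDerivAt_exp u).sub_const 1)
    (Eventually.of_forall fun u => ?_)
    (eventually_nhdsWithin_of_forall fun u (hu : 0 < u) => by positivity)
    (tendsto_nhdsGT_zero_of_continuous (by fun_prop) (by simp))
    (tendsto_nhdsGT_zero_of_continuous (by fun_prop) (by simp)) ?_
  · exact (((hasDerivAt_exp u).sub_const 1).add ((hasDerivAt_id u).mul (hasDerivAt_exp u)))
      |>.congr_deriv (by simp only [id]; ring)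
  · have : ContinuousAt (fun u : ℝ => exp u / ((2 + u) * exp u)) 0 := by
      fun_prop (disch := simp)
    simpa using this.tendsto.mono_left nhdsWithin_le_nhds

lemma tendsto_inv_sub_inv_exp_sub_one_nhdsGT_zero :
    Tendsto (fun u : ℝ => u⁻¹ - (exp u - 1)⁻¹) (𝓝[>] 0) (𝓝 (1 / 2)) := by
  have hquot : Tendsto (fun u : ℝ => (exp u - 1 - u) / (u * (exp u - 1))) (𝓝[>] 0) (𝓝 (1 / 2)) := by
    refine HasDerivAt.lhopital_zero_nhdsGT
      (Eventually.of_forall fun u => ((hasDerivAt_exp u).sub_const 1).sub (hasDerivAt_id u))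
      (Eventually.of_forall fun u => (hasDerivAt_id u).mul ((hasDerivAt_exp u).sub_const 1))
      (eventually_nhdsWithin_of_forall fun u (hu : 0 < u) => ?_)
      (tendsto_nhdsGT_zero_of_continuous (by fun_prop) (by simp))
      (tendsto_nhdsGT_zero_of_continuous (by fun_prop) (by simp)) ?_
    · simp only [id, one_mul]
      have h1 : 1 < exp u := one_lt_exp_iff.mpr hu
      positivity
    · simpa only [id, one_mul, mul_comm] using tendsto_exp_sub_one_div_exp_sub_one_add_mul_exp
  refine hquot.congr' (eventually_nhdsWithin_of_forall fun u (hu : 0 < u) => ?_)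
  have hexp : exp u - 1 ≠ 0 := (sub_pos.mpr (one_lt_exp_iff.mpr hu)).ne'
  field_simp

lemma two_div_sub_one_div_one_sub_exp_neg_half_add_one {c : ℝ} (hc : c ≠ 0) :
    2 / c - 1 / (1 - exp (-c / 2)) + 1 = (c / 2)⁻¹ - (exp (c / 2) - 1)⁻¹ := by
  have hexp : exp (c / 2) - 1 ≠ 0 :=
    sub_ne_zero.mpr fun h => hc (by linarith [exp_eq_one_iff _ |>.mp h])
  rw [neg_div, exp_neg]
  field_simp
  ring

/-- g(c) = 2/c − 1/(1 − e^{−c/2}) + 1 is strictly decreasing on (0,∞),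
tends to 1/2 at 0⁺ and to 0 at ∞, hence for every ρ > 2 there is a unique c > 0
with g(c) = 1/ρ. -/
theorem papr_monotone_function :
    let g : ℝ → ℝ := fun c => 2 / c - 1 / (1 - Real.exp (-c / 2)) + 1
    StrictAntiOn g (Set.Ioi 0) ∧
    Tendsto g (nhdsWithin 0 (Set.Ioi 0)) (nhds (1 / 2)) ∧
    Tendsto g atTop (nhds 0) ∧
    ∀ ρ : ℝ, 2 < ρ → ∃! c : ℝ, 0 < c ∧ g c = 1 / ρ := by
  intro g
  set φ : ℝ → ℝ := fun u => u⁻¹ - (exp u - 1)⁻¹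
  have hg : EqOn g (fun c => φ (c / 2)) (Ioi 0) := fun c hc =>
    two_div_sub_one_div_one_sub_exp_neg_half_add_one (ne_of_gt hc)
  have hanti : StrictAntiOn g (Ioi 0) := fun a (ha : 0 < a) b (hb : 0 < b) hab => by
    rw [hg ha, hg hb]
    exact strictAntiOn_inv_sub_inv_exp_sub_one (half_pos ha) (half_pos hb) (by linarith)
  have hcont : ContinuousOn g (Ioi 0) :=
    (continuousOn_inv_sub_inv_exp_sub_one.comp (continuousOn_id.div_const 2)
      fun c (hc : 0 < c) => half_pos hc).congr hg
  have hhalf : Tendsto (fun c : ℝ => c / 2) (𝓝[>] 0) (𝓝[>] 0) :=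
    tendsto_nhdsWithin_iff.mpr ⟨tendsto_nhdsGT_zero_of_continuous (by fun_prop) (zero_div 2),
      eventually_nhdsWithin_of_forall fun c (hc : 0 < c) => half_pos hc⟩
  have hzero : Tendsto g (𝓝[>] 0) (𝓝 (1 / 2)) :=
    (tendsto_inv_sub_inv_exp_sub_one_nhdsGT_zero.comp hhalf).congr'
      (eventuallyEq_nhdsWithin_of_eqOn hg).symm
  have htop : Tendsto g atTop (𝓝 0) :=
    (tendsto_inv_sub_inv_exp_sub_one_atTop.comp (tendsto_id.atTop_div_const two_pos)).congr'
      ((eventually_gt_atTop 0).mono fun c hc => (hg hc).symm)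
  refine ⟨hanti, hzero, htop, fun ρ hρ => hanti.existsUnique_eq_of_tendsto hcont hzero htop
    (by positivity) ?_⟩
  rw [div_lt_div_iff₀ (by linarith) two_pos]
  linarith
end

section
/- Among probability densities f on [0, T] maximizing the functional h(f) = −∫₀^T f(r) log(f(r)/r) dr subject to the normalization ∫₀^T f = 1 and the second-moment constraint ∫₀^T r² f(r) dr ≤ P with T² = ρP and ρ = 2, the optimal density is f*(r) = (2/T²) r for r ∈ [0,T], attaining h(f*) = log(T²/2) = log P. -/
open Real MeasureTheory

lemma gibbs_pointwise (x y : ℝ) (hx : 0 ≤ x) (hy : 0 < y) :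
    x - y ≤ x * Real.log (x / y) := by
  rcases eq_or_lt_of_le hx with h | h
  · simp [← h]; linarith
  · have h1 : Real.log (y / x) ≤ y / x - 1 :=
      Real.log_le_sub_one_of_pos (by positivity)
    have h2 : Real.log (y / x) = Real.log y - Real.log x :=
      Real.log_div hy.ne' h.ne'
    have h3 : Real.log (x / y) = Real.log x - Real.log y :=
      Real.log_div h.ne' hy.ne'
    have h4 : x * (y / x - 1) = y - x := by field_simp
    nlinarith [mul_le_mul_of_nonneg_left h1 hx]

/-- for ρ = 2 and T = √(ρP), the density f*(r) = (2/T²) r on [0,T]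
maximizes the radial entropy −∫ f log(f/r) under normalization and second-moment
constraint ∫ r² f ≤ P, and the attained maximum is log(T²/2) = log P. -/
theorem linear_density_optimal_for_rho_two (P : ℝ) (hP : 0 < P) :
    let T : ℝ := Real.sqrt (2 * P)
    let fstar : ℝ → ℝ := fun r => 2 / T ^ 2 * r
    (∀ f : ℝ → ℝ,
        (∀ r ∈ Set.Icc (0:ℝ) T, 0 ≤ f r) →
        IntervalIntegrable f volume 0 T →
        IntervalIntegrable (fun r => f r * Real.log (f r / r)) volume 0 T →
        (∫ r in (0:ℝ)..T, f r) = 1 →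
        (∫ r in (0:ℝ)..T, r ^ 2 * f r) ≤ P →
        -∫ r in (0:ℝ)..T, f r * Real.log (f r / r) ≤
          -∫ r in (0:ℝ)..T, fstar r * Real.log (fstar r / r)) ∧
    (-∫ r in (0:ℝ)..T, fstar r * Real.log (fstar r / r) = Real.log (T ^ 2 / 2)) ∧
    Real.log (T ^ 2 / 2) = Real.log P := by
  intro T fstar
  have hT2 : T ^ 2 = 2 * P := Real.sq_sqrt (by linarith)
  have hTpos : 0 < T := Real.sqrt_pos.mpr (by linarith)
  have hT2pos : (0:ℝ) < T ^ 2 := by positivity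
  -- the value of fstar's entropy integrand
  have hfs : ∀ r : ℝ, fstar r * Real.log (fstar r / r)
      = Real.log (2 / T ^ 2) * (2 / T ^ 2 * r) := by
    intro r
    rcases eq_or_ne r 0 with h | h
    · simp [fstar, h]
    · have hdiv : fstar r / r = 2 / T ^ 2 := by
        show 2 / T ^ 2 * r / r = 2 / T ^ 2
        rw [mul_div_assoc, div_self h, mul_one]
      rw [hdiv]; ring
  have hid : (∫ r in (0:ℝ)..T, r) = T ^ 2 / 2 := by
    simp
  have hnorm : (∫ r in (0:ℝ)..T, fstar r) = 1 := by
    show (∫ r in (0:ℝ)..T, 2 / T ^ 2 * r) = 1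
    rw [intervalIntegral.integral_const_mul, hid]
    field_simp
  have hA : (∫ r in (0:ℝ)..T, fstar r * Real.log (fstar r / r))
      = Real.log (2 / T ^ 2) := by
    calc (∫ r in (0:ℝ)..T, fstar r * Real.log (fstar r / r))
        = ∫ r in (0:ℝ)..T, Real.log (2 / T ^ 2) * (2 / T ^ 2 * r) := by
          simp only [hfs]
      _ = Real.log (2 / T ^ 2) * ∫ r in (0:ℝ)..T, 2 / T ^ 2 * r := by
          rw [intervalIntegral.integral_const_mul]
      _ = Real.log (2 / T ^ 2) := by
          rw [show (∫ r in (0:ℝ)..T, 2 / T ^ 2 * r) = ∫ r in (0:ℝ)..T, fstar r from rfl,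
            hnorm, mul_one]
  set c : ℝ := Real.log (T ^ 2 / 2) with hc
  have hlog : Real.log (2 / T ^ 2) = -c := by
    rw [hc, show (2 / T ^ 2 : ℝ) = (T ^ 2 / 2)⁻¹ by field_simp, Real.log_inv]
  refine ⟨?_, ?_, ?_⟩
  · intro f hf0 hfint hgint hfone _hmom
    rw [hA, hlog, neg_neg]
    have hfsint : IntervalIntegrable fstar volume 0 T := by
      apply Continuous.intervalIntegrable
      exact continuous_const.mul continuous_id
    have hlhsint : IntervalIntegrable (fun r => f r - fstar r) volume 0 T :=
      hfint.sub hfsint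
    have hrhsint : IntervalIntegrable
        (fun r => f r * Real.log (f r / r) + c * f r) volume 0 T :=
      hgint.add (hfint.const_mul c)
    have h0 : ∀ᵐ r : ℝ ∂volume, r ≠ (0:ℝ) := by
      have hset : {a : ℝ | ¬ a ≠ 0} = {(0:ℝ)} := by ext r; simp
      rw [ae_iff, hset]
      exact measure_singleton 0
    have hae : ∀ᵐ r ∂(volume.restrict (Set.Icc (0:ℝ) T)),
        f r - fstar r ≤ f r * Real.log (f r / r) + c * f r := by
      filter_upwards [ae_restrict_mem measurableSet_Icc, ae_restrict_of_ae h0]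
        with r hr hr0
      have hrpos : 0 < r := lt_of_le_of_ne hr.1 (Ne.symm hr0)
      have hx : 0 ≤ f r := hf0 r hr
      have hy : 0 < fstar r := by
        show 0 < 2 / T ^ 2 * r
        positivity
      rcases eq_or_lt_of_le hx with h | hfr
      · simp [← h]; linarith
      · have key := gibbs_pointwise (f r) (fstar r) hx hy
        have hrew : f r * Real.log (f r / fstar r)
            = f r * Real.log (f r / r) + c * f r := by
          have hq : f r / fstar r = (f r / r) * (T ^ 2 / 2) := by
            show f r / (2 / T ^ 2 * r) = _
            field_simp
          rw [hq, Real.log_mul (div_pos hfr hrpos).ne' (by positivity), ← hc]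
          ring
        linarith [hrew ▸ key]
    have hmono := intervalIntegral.integral_mono_ae_restrict hTpos.le
      hlhsint hrhsint hae
    have e1 : (∫ r in (0:ℝ)..T, (f r - fstar r)) = 0 := by
      rw [intervalIntegral.integral_sub hfint hfsint, hfone, hnorm]; ring
    have e2 : (∫ r in (0:ℝ)..T, (f r * Real.log (f r / r) + c * f r))
        = (∫ r in (0:ℝ)..T, f r * Real.log (f r / r)) + c := by
      rw [intervalIntegral.integral_add hgint (hfint.const_mul c),
        intervalIntegral.integral_const_mul, hfone, mul_one]
    rw [e1, e2] at hmono
    linarith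
  · rw [hA, hlog, neg_neg]
  · rw [hc, hT2]
    norm_num
end

section
/- For any density f on [0,T] satisfying ∫₀^T f = 1 and ∫₀^T r² f(r) dr ≤ P, and the truncated Rayleigh-type density f*(r) = a r e^{−b r²/2} on [0,T] with b > 0, same normalization, and second moment exactly P, we have −∫₀^T f log(f/r) dr ≤ −∫₀^T f* log(f*/r) dr = −log a + bP/2 (Gibbs' inequality / maximum entropy under moment constraints). -/
/-!
Gibbs' inequality `p log (p / q) ≥ p - q` (from `log x ≤ x - 1`), applied pointwise with
`q = f*`, bounds the entropy of `f` by `-∫ f log (f* / r)`. Since `log (f* r / r) = log a - b r² / 2`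
is affine in `r²`, that bound only involves the mass and the second moment of `f`, so it is at most
`-log a + b P / 2`; for `f = f*` the same computation gives equality.
-/

open Real MeasureTheory

namespace Real

theorem mul_log_div_add_sub_le_mul_log_div {p q r : ℝ} (hp : 0 ≤ p) (hq : 0 < q) (hr : r ≠ 0) :
    p * log (q / r) + p - q ≤ p * log (p / r) := by
  rcases hp.eq_or_lt with rfl | hp
  · simpa using hq.le
  have hsplit : log (p / r) = log (p / q) + log (q / r) := by
    rw [← log_mul (by positivity) (div_ne_zero hq.ne' hr), div_mul_div_cancel₀ hq.ne']
  have hgibbs : p - q ≤ p * log (p / q) := by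
    have := mul_le_mul_of_nonneg_left (one_sub_inv_le_log_of_pos (div_pos hp hq)) hp.le
    rwa [inv_div, mul_sub, mul_one, mul_div_cancel₀ _ hp.ne'] at this
  rw [hsplit]
  linarith

end Real

theorem integral_mul_exp_neg_mul_sq_div_two {b : ℝ} (hb : b ≠ 0) (T : ℝ) :
    ∫ r in (0:ℝ)..T, r * exp (-b * r ^ 2 / 2) = (1 - exp (-b * T ^ 2 / 2)) / b := by
  have hderiv (r : ℝ) :
      HasDerivAt (fun r => -exp (-b * r ^ 2 / 2) / b) (r * exp (-b * r ^ 2 / 2)) r := by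
    have hexp := ((((hasDerivAt_pow 2 r).const_mul (-b)).div_const 2).exp.neg).div_const b
    refine hexp.congr_deriv ?_
    field_simp
    ring
  rw [intervalIntegral.integral_eq_sub_of_hasDerivAt (fun r _ => hderiv r)
    (Continuous.intervalIntegrable (by fun_prop) _ _)]
  simp only [neg_mul, ne_eq, OfNat.ofNat_ne_zero, not_false_eq_true, zero_pow, mul_zero, zero_div,
    exp_zero]
  ring

noncomputable def rayleighDensity (a b r : ℝ) : ℝ := a * r * exp (-b * r ^ 2 / 2)

namespace rayleighDensity

variable {a b : ℝ}

theorem pos (ha : 0 < a) {r : ℝ} (hr : 0 < r) : 0 < rayleighDensity a b r := by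
  unfold rayleighDensity; positivity

theorem integral_eq (hb : b ≠ 0) (T : ℝ) :
    ∫ r in (0:ℝ)..T, rayleighDensity a b r = a / b * (1 - exp (-b * T ^ 2 / 2)) := by
  simp only [rayleighDensity, mul_assoc, intervalIntegral.integral_const_mul,
    integral_mul_exp_neg_mul_sq_div_two hb]
  ring

theorem log_div (ha : 0 < a) {r : ℝ} (hr : r ≠ 0) :
    log (rayleighDensity a b r / r) = log a - b * r ^ 2 / 2 := by
  rw [rayleighDensity, mul_right_comm, mul_div_cancel_right₀ _ hr, log_mul ha.ne' (exp_ne_zero _),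
    log_exp]
  ring

theorem mul_log_div (ha : 0 < a) (r : ℝ) :
    rayleighDensity a b r * log (rayleighDensity a b r / r)
      = log a * rayleighDensity a b r - b / 2 * (r ^ 2 * rayleighDensity a b r) := by
  rcases eq_or_ne r 0 with rfl | hr
  · simp [rayleighDensity]
  rw [log_div ha hr]
  ring

theorem continuous : Continuous (rayleighDensity a b) := by
  unfold rayleighDensity; fun_prop

theorem neg_integral_mul_log_div (ha : 0 < a) (T : ℝ) :
    -∫ r in (0:ℝ)..T, rayleighDensity a b r * log (rayleighDensity a b r / r)
      = -log a * (∫ r in (0:ℝ)..T, rayleighDensity a b r)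
        + b / 2 * ∫ r in (0:ℝ)..T, r ^ 2 * rayleighDensity a b r := by
  have hmass : IntervalIntegrable (rayleighDensity a b) volume 0 T :=
    continuous.intervalIntegrable 0 T
  have hmom : IntervalIntegrable (fun r => r ^ 2 * rayleighDensity a b r) volume 0 T :=
    hmass.continuousOn_mul (by fun_prop)
  simp only [mul_log_div ha, intervalIntegral.integral_sub (hmass.const_mul _)
    (hmom.const_mul _), intervalIntegral.integral_const_mul]
  ring

theorem le_integral_mul_log_div (ha : 0 < a) {T : ℝ} (hT : 0 ≤ T) {f : ℝ → ℝ}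
    (hf_nonneg : ∀ r ∈ Set.Icc 0 T, 0 ≤ f r) (hf : IntervalIntegrable f volume 0 T)
    (hf_log : IntervalIntegrable (fun r => f r * log (f r / r)) volume 0 T) :
    log a * (∫ r in (0:ℝ)..T, f r) - b / 2 * (∫ r in (0:ℝ)..T, r ^ 2 * f r)
        + (∫ r in (0:ℝ)..T, f r) - ∫ r in (0:ℝ)..T, rayleighDensity a b r
      ≤ ∫ r in (0:ℝ)..T, f r * log (f r / r) := by
  have hmom : IntervalIntegrable (fun r => r ^ 2 * f r) volume 0 T :=
    hf.continuousOn_mul (by fun_prop)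
  have hmass : IntervalIntegrable (rayleighDensity a b) volume 0 T :=
    continuous.intervalIntegrable 0 T
  have hlin := ((hf.const_mul (log a)).sub (hmom.const_mul (b / 2))).add hf
  calc _ = ∫ r in (0:ℝ)..T,
        log a * f r - b / 2 * (r ^ 2 * f r) + f r - rayleighDensity a b r := by
          rw [intervalIntegral.integral_sub hlin hmass,
            intervalIntegral.integral_add ((hf.const_mul _).sub (hmom.const_mul _)) hf,
            intervalIntegral.integral_sub (hf.const_mul _) (hmom.const_mul _),
            intervalIntegral.integral_const_mul, intervalIntegral.integral_const_mul]
    _ ≤ _ := by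
      refine intervalIntegral.integral_mono_on_of_le_Ioo hT (hlin.sub hmass) hf_log
        fun r hr => ?_
      have hgibbs := mul_log_div_add_sub_le_mul_log_div (hf_nonneg r (Set.Ioo_subset_Icc_self hr))
        (pos (b := b) ha hr.1) hr.1.ne'
      rw [log_div ha hr.1.ne'] at hgibbs
      linarith

end rayleighDensity

theorem truncated_rayleigh_max_entropy_general (a b T P : ℝ)
    (ha : 0 < a) (hb : 0 < b) (hT : 0 < T)
    (hnorm : a / b * (1 - Real.exp (-b * T ^ 2 / 2)) = 1)
    (hmom : ∫ r in (0:ℝ)..T, r ^ 2 * (a * r * Real.exp (-b * r ^ 2 / 2)) = P) :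
    let fstar : ℝ → ℝ := fun r => a * r * Real.exp (-b * r ^ 2 / 2)
    (∀ f : ℝ → ℝ,
        (∀ r ∈ Set.Icc (0:ℝ) T, 0 ≤ f r) →
        IntervalIntegrable f volume 0 T →
        IntervalIntegrable (fun r => f r * Real.log (f r / r)) volume 0 T →
        (∫ r in (0:ℝ)..T, f r) = 1 →
        (∫ r in (0:ℝ)..T, r ^ 2 * f r) ≤ P →
        -∫ r in (0:ℝ)..T, f r * Real.log (f r / r) ≤
          -∫ r in (0:ℝ)..T, fstar r * Real.log (fstar r / r)) ∧
    -∫ r in (0:ℝ)..T, fstar r * Real.log (fstar r / r) = -Real.log a + b * P / 2 := by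
  intro fstar
  have hmass : ∫ r in (0:ℝ)..T, rayleighDensity a b r = 1 :=
    (rayleighDensity.integral_eq hb.ne' T).trans hnorm
  have hmom' : ∫ r in (0:ℝ)..T, r ^ 2 * rayleighDensity a b r = P := hmom
  have hentropy : -∫ r in (0:ℝ)..T, rayleighDensity a b r * log (rayleighDensity a b r / r)
      = -log a + b * P / 2 := by
    rw [rayleighDensity.neg_integral_mul_log_div ha T, hmass, hmom']
    ring
  refine ⟨fun f hf_nonneg hf hf_log hf_mass hf_mom => ?_, hentropy⟩
  have hgibbs := rayleighDensity.le_integral_mul_log_div (b := b) ha hT.le hf_nonneg hf hf_log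
  rw [hf_mass, hmass] at hgibbs
  refine le_of_le_of_eq ?_ hentropy.symm
  linarith [mul_le_mul_of_nonneg_left hf_mom (half_pos hb).le]

/-- maximum entropy under moment constraints (Gibbs' inequality):
the truncated Rayleigh-type density f*(r) = a r e^{−b r²/2} on [0,T] with b > 0,
unit mass and second moment exactly P, maximizes the radial entropy −∫ f log(f/r)
among all densities on [0,T] with second moment at most P, its entropy being
−log a + bP/2. -/
theorem truncated_rayleigh_max_entropy (a b T P : ℝ)
    (ha : 0 < a) (hb : 0 < b) (hT : 0 < T) (hP : 0 < P)
    (hnorm : a / b * (1 - Real.exp (-b * T ^ 2 / 2)) = 1)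
    (hmom : ∫ r in (0:ℝ)..T, r ^ 2 * (a * r * Real.exp (-b * r ^ 2 / 2)) = P) :
    let fstar : ℝ → ℝ := fun r => a * r * Real.exp (-b * r ^ 2 / 2)
    (∀ f : ℝ → ℝ,
        (∀ r ∈ Set.Icc (0:ℝ) T, 0 ≤ f r) →
        IntervalIntegrable f volume 0 T →
        IntervalIntegrable (fun r => f r * Real.log (f r / r)) volume 0 T →
        (∫ r in (0:ℝ)..T, f r) = 1 →
        (∫ r in (0:ℝ)..T, r ^ 2 * f r) ≤ P →
        -∫ r in (0:ℝ)..T, f r * Real.log (f r / r) ≤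
          -∫ r in (0:ℝ)..T, fstar r * Real.log (fstar r / r)) ∧
    -∫ r in (0:ℝ)..T, fstar r * Real.log (fstar r / r) = -Real.log a + b * P / 2 :=
  truncated_rayleigh_max_entropy_general a b T P ha hb hT hnorm hmom
end
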